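/- arXiv:2308.08791 — 3 statements merged into one kernel-verified Lean document; each statement's English description precedes it below -/
import Mathlib

section
/- For the standard mollifier μ, the function κ(σ) = μ(σ)·σ/(σ² − 1)² satisfies |κ(σ)| < 1/2 for all σ with |σ| < 1. -/
noncomputable def stdMollifier (σ : ℝ) : ℝ :=
  if |σ| < 1 then Real.exp (-(1 / (1 - σ ^ 2))) else 0

/-! With `x = 1 / (1 - σ²) ≥ 1` one has `σ² = (x - 1) / x` and
`|κ(σ)| = |σ| x² e⁻ˣ`, so the bound amounts to `4 (x - 1) x³ < e²ˣ` for `x ≥ 1`.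
This follows by squaring the Taylor lower bound `∑_{k ≤ 4} xᵏ / k! ≤ eˣ`. -/

lemma taylor_four_le_exp {x : ℝ} (hx : 0 ≤ x) :
    1 + x + x ^ 2 / 2 + x ^ 3 / 6 + x ^ 4 / 24 ≤ Real.exp x := by
  have h := Real.sum_le_exp_of_nonneg hx 5
  simp only [Finset.sum_range_succ, Finset.sum_range_zero, Nat.factorial] at h
  norm_num at h
  linarith

lemma four_mul_sub_one_mul_pow_three_lt_sq_taylor_four {x : ℝ} (hx : 1 ≤ x) :
    4 * (x - 1) * x ^ 3 < (1 + x + x ^ 2 / 2 + x ^ 3 / 6 + x ^ 4 / 24) ^ 2 := by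
  nlinarith [sq_nonneg (x - 3), sq_nonneg (x ^ 2 - 3 * x), sq_nonneg (x ^ 2 - 6 * x + 3),
    sq_nonneg (x - 1), sq_nonneg x, sq_nonneg (x ^ 2 - 2 * x), sq_nonneg (x ^ 3 - 3 * x ^ 2),
    sq_nonneg (x ^ 2 + x - 8), mul_nonneg (sub_nonneg.2 hx) (sq_nonneg (x - 3))]

lemma four_mul_sub_one_mul_pow_three_lt_exp_sq {x : ℝ} (hx : 1 ≤ x) :
    4 * (x - 1) * x ^ 3 < Real.exp x ^ 2 :=
  (four_mul_sub_one_mul_pow_three_lt_sq_taylor_four hx).trans_le <|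
    pow_le_pow_left₀ (by positivity) (taylor_four_le_exp (by linarith)) 2

lemma abs_stdMollifier_mul_div_eq {σ : ℝ} (hσ : |σ| < 1) :
    |stdMollifier σ * σ / (σ ^ 2 - 1) ^ 2| =
      |σ| * (1 / (1 - σ ^ 2)) ^ 2 / Real.exp (1 / (1 - σ ^ 2)) := by
  rw [stdMollifier, if_pos hσ, Real.exp_neg, abs_div, abs_mul, abs_of_pos (inv_pos.2 (Real.exp_pos _)),
    abs_sq, ← neg_sub 1 (σ ^ 2), neg_sq]
  field_simp

theorem kappa_bound (σ : ℝ) (hσ : |σ| < 1) :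
    |stdMollifier σ * σ / (σ ^ 2 - 1) ^ 2| < 1 / 2 := by
  have ht : 0 < 1 - σ ^ 2 := by nlinarith [sq_abs σ, abs_nonneg σ]
  set x := 1 / (1 - σ ^ 2) with hx
  have hx1 : 1 ≤ x := by rw [hx, le_div_iff₀ ht]; nlinarith [sq_nonneg σ]
  have hσx : σ ^ 2 * x = x - 1 := by rw [hx]; field_simp; ring
  have hsq : (2 * |σ| * x ^ 2) ^ 2 < Real.exp x ^ 2 := by
    calc (2 * |σ| * x ^ 2) ^ 2 = 4 * (σ ^ 2 * x) * x ^ 3 := by rw [← sq_abs σ]; ring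
      _ = 4 * (x - 1) * x ^ 3 := by rw [hσx]
      _ < Real.exp x ^ 2 := four_mul_sub_one_mul_pow_three_lt_exp_sq hx1
  have hlt : 2 * |σ| * x ^ 2 < Real.exp x := lt_of_pow_lt_pow_left₀ 2 (Real.exp_pos x).le hsq
  rw [abs_stdMollifier_mul_div_eq hσ, div_lt_iff₀ (Real.exp_pos x)]
  linarith
end

section
/- (Expansion-containment for Macbeath regions) Let Ω ⊂ ℝ^d be a convex body, 0 < λ < 1, and β = (3+λ)/(1−λ). For any x, y ∈ Ω, if M^λ(x) ∩ M^λ(y) ≠ ∅ then M^λ(y) ⊆ M^{βλ}(x). -/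
/-- The λ-scaled Macbeath region of `Ω` at `x`. -/
def macbeath {d : ℕ} (Ω : Set (EuclideanSpace ℝ (Fin d)))
    (x : EuclideanSpace ℝ (Fin d)) (lam : ℝ) : Set (EuclideanSpace ℝ (Fin d)) :=
  {y | ∃ z, y = x + lam • z ∧ x + z ∈ Ω ∧ x - z ∈ Ω}

private lemma convex_comb4 {E : Type*} [AddCommGroup E] [Module ℝ E] {s : Set E}
    (h : Convex ℝ s) {c1 c2 c3 c4 : ℝ} {p1 p2 p3 p4 : E}
    (h1 : 0 ≤ c1) (h2 : 0 ≤ c2) (h3 : 0 ≤ c3) (h4 : 0 ≤ c4)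
    (hsum : c1 + c2 + c3 + c4 = 1)
    (hp1 : p1 ∈ s) (hp2 : p2 ∈ s) (hp3 : p3 ∈ s) (hp4 : p4 ∈ s) :
    c1 • p1 + c2 • p2 + c3 • p3 + c4 • p4 ∈ s := by
  have := h.sum_mem (t := (Finset.univ : Finset (Fin 4)))
    (w := ![c1, c2, c3, c4]) (z := ![p1, p2, p3, p4])
    (fun i _ => by fin_cases i <;> assumption)
    (by simp [Fin.sum_univ_four, hsum])
    (fun i _ => by fin_cases i <;> assumption)
  simpa [Fin.sum_univ_four] using this

theorem macbeath_expansion_containment {d : ℕ} (Ω : Set (EuclideanSpace ℝ (Fin d)))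
    (hconv : Convex ℝ Ω) (hcomp : IsCompact Ω) (hint : (interior Ω).Nonempty)
    (lam : ℝ) (hlam0 : 0 < lam) (hlam1 : lam < 1)
    (x y : EuclideanSpace ℝ (Fin d)) (hx : x ∈ Ω) (hy : y ∈ Ω)
    (hmeet : (macbeath Ω x lam ∩ macbeath Ω y lam).Nonempty) :
    macbeath Ω y lam ⊆ macbeath Ω x (((3 + lam) / (1 - lam)) * lam) := by
  obtain ⟨p, ⟨a, hpa, hxa, hxa'⟩, ⟨b, hpb, hyb, hyb'⟩⟩ := hmeet
  rintro q ⟨c, hqc, hyc, hyc'⟩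
  have h1 : (0:ℝ) < 1 - lam := by linarith
  have h3 : (0:ℝ) < 3 + lam := by linarith
  have h1' : (0:ℝ) < 1 + lam := by linarith
  have hyx : y = x + (lam • a - lam • b) := by
    have h := hpa.symm.trans hpb
    have : x + lam • a - lam • b = y + lam • b - lam • b := by rw [h]
    simpa [add_sub_cancel_right, add_sub_assoc] using this.symm
  subst hyx
  subst hqc
  subst hpa
  refine ⟨((1 - lam)/(3 + lam)) • (a - b + c), ?_, ?_, ?_⟩
  · match_scalars <;> field_simp <;> ring
  · have key : x + ((1 - lam)/(3 + lam)) • (a - b + c)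
        = ((1 - lam)^2/((3 + lam)*(1 + lam))) • (x + a)
          + ((1 - lam)/(3 + lam)) • ((x + (lam • a - lam • b)) + c)
          + ((1 - lam)^2/((3 + lam)*(1 + lam))) • ((x + (lam • a - lam • b)) - b)
          + (8*lam/((3 + lam)*(1 + lam))) • x := by
      match_scalars <;> field_simp <;> ring
    rw [key]
    exact convex_comb4 hconv (by positivity) (by positivity) (by positivity)
      (by positivity) (by field_simp; ring) hxa hyc hyb' hx
  · have key : x - ((1 - lam)/(3 + lam)) • (a - b + c)
        = ((1 + lam)/(3 + lam)) • (x - a)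
          + ((1 - lam)/(3 + lam)) • ((x + (lam • a - lam • b)) - c)
          + ((1 + lam)/(3 + lam)) • ((x + (lam • a - lam • b)) + b)
          + (0:ℝ) • x := by
      match_scalars <;> field_simp <;> ring
    rw [key]
    exact convex_comb4 hconv (by positivity) (by positivity) (by positivity)
      le_rfl (by field_simp; ring) hxa' hyc' hyb hx
end

section
/- Let f: ℝ^d → ℝ be concave with hypograph f⁻ = {(x, z) : z ≤ f(x)}, and for x ∈ f⁻ let ray(x) = f(π(x)) − z(x) be the length of the vertical ray from x up to the boundary of f⁻ (where π is projection onto ℝ^d and z the last coordinate). Then for 0 ≤ λ < 1 and any y ∈ M^λ_{f⁻}(x), one has (1 − λ)·ray(x) ≤ ray(y) ≤ (1 + λ)·ray(x). -/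
/-!
Write `y = x + λ z` with `x ± z` in the hypograph. Along the segment from `x` to `x + z`, concavity
puts `f` above the chord, which bounds `ray y` from below by `(1 - λ) ray x`; and since `π x` lies
between `π (x - z)` and `π y`, concavity at `π x` bounds `ray y` from above by `(1 + λ) ray x`.
-/

section Concave

variable {E : Type*} [AddCommGroup E] [Module ℝ E] {f : E → ℝ}

theorem ConcaveOn.le_map_add_smul (hf : ConcaveOn ℝ Set.univ f) (a v : E) {t : ℝ}
    (ht0 : 0 ≤ t) (ht1 : t ≤ 1) :
    (1 - t) * f a + t * f (a + v) ≤ f (a + t • v) := by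
  have key := hf.2 (Set.mem_univ a) (Set.mem_univ (a + v)) (sub_nonneg.2 ht1) ht0 (by ring)
  have hcomb : (1 - t) • a + t • (a + v) = a + t • v := by module
  simpa only [hcomb, smul_eq_mul] using key

/-- `a` divides the segment from `a - v` to `a + t • v` in the ratio `1 : t`. -/
theorem ConcaveOn.map_add_smul_add_smul_map_sub_le (hf : ConcaveOn ℝ Set.univ f) (a v : E)
    {t : ℝ} (ht : 0 ≤ t) :
    f (a + t • v) + t * f (a - v) ≤ (1 + t) * f a := by
  have hpos : 0 < 1 + t := by linarith
  have hmid : a - v + (1 + t)⁻¹ • ((1 + t) • v) = a := by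
    rw [smul_smul, inv_mul_cancel₀ hpos.ne', one_smul, sub_add_cancel]
  have key := hf.le_map_add_smul (a - v) ((1 + t) • v) (inv_nonneg.2 hpos.le)
    (inv_le_one_of_one_le₀ (by linarith))
  have hend : a - v + (1 + t) • v = a + t • v := by module
  rw [hmid, hend] at key
  have hweight : 1 - (1 + t)⁻¹ = t * (1 + t)⁻¹ := by field_simp; ring
  rw [hweight] at key
  calc f (a + t • v) + t * f (a - v)
      = (1 + t) * (t * (1 + t)⁻¹ * f (a - v) + (1 + t)⁻¹ * f (a + t • v)) := by
        field_simp; ring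
    _ ≤ (1 + t) * f a := mul_le_mul_of_nonneg_left key hpos.le

theorem ConcaveOn.mul_sub_le_sub_of_add_le (hf : ConcaveOn ℝ Set.univ f) (x z : E × ℝ)
    {t : ℝ} (ht0 : 0 ≤ t) (ht1 : t ≤ 1) (hxz : (x + z).2 ≤ f (x + z).1) :
    (1 - t) * (f x.1 - x.2) ≤ f (x + t • z).1 - (x + t • z).2 := by
  have key := hf.le_map_add_smul x.1 z.1 ht0 ht1
  simp only [Prod.fst_add, Prod.snd_add, Prod.smul_fst, Prod.smul_snd, smul_eq_mul] at hxz ⊢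
  linarith [mul_le_mul_of_nonneg_left hxz ht0]

theorem ConcaveOn.sub_le_mul_sub_of_sub_le (hf : ConcaveOn ℝ Set.univ f) (x z : E × ℝ)
    {t : ℝ} (ht : 0 ≤ t) (hxz : (x - z).2 ≤ f (x - z).1) :
    f (x + t • z).1 - (x + t • z).2 ≤ (1 + t) * (f x.1 - x.2) := by
  have key := hf.map_add_smul_add_smul_map_sub_le x.1 z.1 ht
  simp only [Prod.fst_add, Prod.snd_add, Prod.fst_sub, Prod.snd_sub, Prod.smul_fst,
    Prod.smul_snd, smul_eq_mul] at hxz ⊢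
  linarith [mul_le_mul_of_nonneg_left hxz ht]

end Concave

theorem macbeath_ray_distance_general {d : ℕ} (f : EuclideanSpace ℝ (Fin d) → ℝ)
    (hconc : ConcaveOn ℝ Set.univ f)
    (F : Set (EuclideanSpace ℝ (Fin d) × ℝ))
    (hF : F = {p | p.2 ≤ f p.1})
    (ray : EuclideanSpace ℝ (Fin d) × ℝ → ℝ)
    (hray : ∀ p, ray p = f p.1 - p.2)
    (lam : ℝ) (hlam0 : 0 ≤ lam) (hlam1 : lam < 1)
    (x : EuclideanSpace ℝ (Fin d) × ℝ)
    (y : EuclideanSpace ℝ (Fin d) × ℝ)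
    (hy : ∃ z, y = x + lam • z ∧ x + z ∈ F ∧ x - z ∈ F) :
    (1 - lam) * ray x ≤ ray y ∧ ray y ≤ (1 + lam) * ray x := by
  obtain ⟨z, rfl, hplus, hminus⟩ := hy
  subst hF
  rw [hray, hray]
  exact ⟨hconc.mul_sub_le_sub_of_add_le x z hlam0 hlam1.le hplus,
    hconc.sub_le_mul_sub_of_sub_le x z hlam0 hminus⟩

theorem macbeath_ray_distance {d : ℕ} (f : EuclideanSpace ℝ (Fin d) → ℝ)
    (hconc : ConcaveOn ℝ Set.univ f)
    (F : Set (EuclideanSpace ℝ (Fin d) × ℝ))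
    (hF : F = {p | p.2 ≤ f p.1})
    (ray : EuclideanSpace ℝ (Fin d) × ℝ → ℝ)
    (hray : ∀ p, ray p = f p.1 - p.2)
    (lam : ℝ) (hlam0 : 0 ≤ lam) (hlam1 : lam < 1)
    (x : EuclideanSpace ℝ (Fin d) × ℝ) (hx : x ∈ F)
    (y : EuclideanSpace ℝ (Fin d) × ℝ)
    (hy : ∃ z, y = x + lam • z ∧ x + z ∈ F ∧ x - z ∈ F) :
    (1 - lam) * ray x ≤ ray y ∧ ray y ≤ (1 + lam) * ray x :=
  macbeath_ray_distance_general f hconc F hF ray hray lam hlam0 hlam1 x y hy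
end
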